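/- Let F(X) = −log det(X) on d×d positive definite matrices, with Bregman divergence D(G,H) = F(G) − F(H) − ⟨∇F(H), G − H⟩ = log(det(H)/det(G)) + tr(H^{-1}(G−H)). For lifted matrices 𝐆 = [[G+gg^T, g],[g^T, 1]] and 𝐇 = [[H+hh^T, h],[h^T, 1]] with G, H positive definite, D(𝐆,𝐇) = D(G,H) + ‖g−h‖²_{H^{-1}}; in particular D(𝐆,𝐇) ≥ ‖g−h‖²_{H^{-1}}. -/

import Mathlib

/-! The lifted matrix is a congruence `𝐆 = S_g · diag(G, 1) · S_gᵀ` by the shear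
`S_g = [[1, g], [0, 1]]` of determinant one, so `det 𝐆 = det G`, and since `S_h⁻¹ S_g = S_{g-h}`,
`𝐇⁻¹ 𝐆` is similar to `diag(H, 1)⁻¹ · 𝐆'` where `𝐆'` is the lift of `G` by `g - h`. The trace of
the latter is `tr(H⁻¹ G) + (g - h)ᵀ H⁻¹ (g - h) + 1`, which gives the identity.

For the inequality, write `H = Bᴴ B`; then `H⁻¹ G` is similar to the positive definite matrix
`B⁻ᴴ G B⁻¹`, so `D(G, H) = ∑ (λᵢ - log λᵢ - 1) ≥ 0` over its eigenvalues `λᵢ`. -/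

open Matrix

namespace Matrix

variable {R n : Type*} [CommRing R] [Fintype n]

theorem trace_fromBlocks {m : Type*} [Fintype m] (A : Matrix n n R) (B : Matrix n m R)
    (C : Matrix m n R) (D : Matrix m m R) :
    (fromBlocks A B C D).trace = A.trace + D.trace := by
  simp [trace, Fintype.sum_sum_type]

omit [Fintype n] in
theorem replicateCol_mul_replicateRow_fin_one (a b : n → R) :
    replicateCol (Fin 1) a * replicateRow (Fin 1) b = vecMulVec a b :=
  (vecMulVec_eq (Fin 1) a b).symm

variable [DecidableEq n]

theorem trace_inv_conj_mul_conj {P : Matrix n n R} (hP : IsUnit P.det) (A B : Matrix n n R) :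
    ((P * A * Pᵀ)⁻¹ * (P * B * Pᵀ)).trace = (A⁻¹ * B).trace := by
  have hPt : IsUnit Pᵀ.det := by rwa [det_transpose]
  simp only [mul_inv_rev, Matrix.mul_assoc, nonsing_inv_mul_cancel_left _ _ hP]
  rw [trace_mul_comm, ← Matrix.mul_assoc, mul_nonsing_inv_cancel_right _ _ hPt]

theorem PosDef.log_det_le_trace_sub_card {A : Matrix n n ℝ} (hA : A.PosDef) :
    Real.log A.det ≤ A.trace - Fintype.card n := by
  have hpos := hA.eigenvalues_pos
  rw [hA.1.det_eq_prod_eigenvalues, hA.1.trace_eq_sum_eigenvalues]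
  simp only [RCLike.ofReal_real_eq_id, id]
  rw [Real.log_prod fun i _ => (hpos i).ne', Fintype.card_eq_sum_ones, Nat.cast_sum, Nat.cast_one,
    ← Finset.sum_sub_distrib]
  exact Finset.sum_le_sum fun i _ => Real.log_le_sub_one_of_pos (hpos i)

end Matrix

section LiftedMatrix

variable {R n : Type*} [CommRing R]

def liftedMatrix (A : Matrix n n R) (a : n → R) : Matrix (n ⊕ Fin 1) (n ⊕ Fin 1) R :=
  fromBlocks (A + vecMulVec a a) (replicateCol (Fin 1) a) (replicateRow (Fin 1) a) 1

variable [DecidableEq n]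

def shearMatrix (a : n → R) : Matrix (n ⊕ Fin 1) (n ⊕ Fin 1) R :=
  fromBlocks 1 (replicateCol (Fin 1) a) 0 1

variable [Fintype n]

theorem det_shearMatrix (a : n → R) : (shearMatrix a).det = 1 := by
  simp [shearMatrix]

theorem liftedMatrix_add (A : Matrix n n R) (a b : n → R) :
    liftedMatrix A (a + b) = shearMatrix a * liftedMatrix A b * (shearMatrix a)ᵀ := by
  simp only [liftedMatrix, shearMatrix, fromBlocks_transpose, fromBlocks_multiply, transpose_one,
    transpose_zero, transpose_replicateCol, Matrix.one_mul, Matrix.mul_one, Matrix.zero_mul,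
    Matrix.mul_zero, zero_add, Matrix.add_mul, replicateCol_mul_replicateRow_fin_one,
    add_vecMulVec, vecMulVec_add, replicateCol_add, replicateRow_add]
  congr 1 <;> abel

theorem det_liftedMatrix (A : Matrix n n R) (a : n → R) : (liftedMatrix A a).det = A.det := by
  rw [liftedMatrix, det_fromBlocks_one₂₂, replicateCol_mul_replicateRow_fin_one,
    add_sub_cancel_right]

theorem inv_liftedMatrix_zero {A : Matrix n n R} (hA : IsUnit A) :
    (liftedMatrix A 0)⁻¹ = liftedMatrix A⁻¹ 0 := by
  simp [liftedMatrix, inv_fromBlocks_zero₂₁_of_isUnit_iff, hA]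

theorem trace_liftedMatrix_zero_mul_liftedMatrix (A B : Matrix n n R) (b : n → R) :
    (liftedMatrix A 0 * liftedMatrix B b).trace = (A * B).trace + b ⬝ᵥ (A *ᵥ b) + 1 := by
  simp [liftedMatrix, fromBlocks_multiply, trace_fromBlocks, mul_add, mul_vecMulVec,
    dotProduct_comm]

theorem trace_inv_liftedMatrix_mul_liftedMatrix {H : Matrix n n R} (hH : IsUnit H)
    (G : Matrix n n R) (g h : n → R) :
    ((liftedMatrix H h)⁻¹ * liftedMatrix G g).trace
      = (H⁻¹ * G).trace + (g - h) ⬝ᵥ (H⁻¹ *ᵥ (g - h)) + 1 := by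
  have hG : liftedMatrix G g = shearMatrix h * liftedMatrix G (g - h) * (shearMatrix h)ᵀ := by
    rw [← liftedMatrix_add, add_sub_cancel]
  have hH' : liftedMatrix H h = shearMatrix h * liftedMatrix H 0 * (shearMatrix h)ᵀ := by
    rw [← liftedMatrix_add, add_zero]
  rw [hG, hH', trace_inv_conj_mul_conj (by simp [det_shearMatrix]), inv_liftedMatrix_zero hH,
    trace_liftedMatrix_zero_mul_liftedMatrix]

end LiftedMatrix

section LogDetDivergence

variable {n : Type*} [Fintype n] [DecidableEq n]

noncomputable def logDetDivergence (G H : Matrix n n ℝ) : ℝ :=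
  Real.log (H.det / G.det) + (H⁻¹ * G).trace - Fintype.card n

theorem logDetDivergence_nonneg {G H : Matrix n n ℝ} (hG : G.PosDef) (hH : H.PosDef) :
    0 ≤ logDetDivergence G H := by
  open scoped MatrixOrder in
  obtain ⟨B, hB, hHB⟩ :=
    CStarAlgebra.isStrictlyPositive_iff_eq_star_mul_self.mp hH.isStrictlyPositive
  have hBdet : IsUnit B.det := (isUnit_iff_isUnit_det B).mp hB
  set A := star B⁻¹ * G * B⁻¹
  have hA : A.PosDef :=
    (IsUnit.posDef_star_left_conjugate_iff (isUnit_nonsing_inv_iff.mpr hB)).mpr hG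
  have hsim : H⁻¹ * G = B⁻¹ * A * B := by
    rw [hHB, Matrix.mul_inv_rev, star_eq_conjTranspose, ← conjTranspose_nonsing_inv]
    simp only [A, star_eq_conjTranspose, Matrix.mul_assoc, nonsing_inv_mul _ hBdet, Matrix.mul_one]
  have htrace : (H⁻¹ * G).trace = A.trace := by
    rw [hsim, trace_mul_cycle, mul_nonsing_inv _ hBdet, Matrix.one_mul]
  have hdet : H.det / G.det = A.det⁻¹ := by
    rw [← det_conj' hB A, ← hsim, det_mul, det_nonsing_inv, Ring.inverse_eq_inv', mul_inv, inv_inv,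
      div_eq_mul_inv]
  rw [logDetDivergence, hdet, Real.log_inv, htrace]
  linarith [hA.log_det_le_trace_sub_card]

theorem logDetDivergence_liftedMatrix {H : Matrix n n ℝ} (hH : IsUnit H) (G : Matrix n n ℝ)
    (g h : n → ℝ) :
    logDetDivergence (liftedMatrix G g) (liftedMatrix H h)
      = logDetDivergence G H + (g - h) ⬝ᵥ (H⁻¹ *ᵥ (g - h)) := by
  simp only [logDetDivergence, det_liftedMatrix, trace_inv_liftedMatrix_mul_liftedMatrix hH,
    Fintype.card_sum, Fintype.card_fin, Nat.cast_add, Nat.cast_one]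
  ring

end LogDetDivergence

theorem lifted_bregman_identity {d : ℕ} (G H : Matrix (Fin d) (Fin d) ℝ)
    (g h : Fin d → ℝ) (hG : G.PosDef) (hH : H.PosDef) :
    (Real.log ((fromBlocks (H + vecMulVec h h) (replicateCol (Fin 1) h) (replicateRow (Fin 1) h)
          (1 : Matrix (Fin 1) (Fin 1) ℝ)).det /
        (fromBlocks (G + vecMulVec g g) (replicateCol (Fin 1) g) (replicateRow (Fin 1) g)
          (1 : Matrix (Fin 1) (Fin 1) ℝ)).det)
      + ((fromBlocks (H + vecMulVec h h) (replicateCol (Fin 1) h) (replicateRow (Fin 1) h)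
          (1 : Matrix (Fin 1) (Fin 1) ℝ))⁻¹ *
         (fromBlocks (G + vecMulVec g g) (replicateCol (Fin 1) g) (replicateRow (Fin 1) g)
          (1 : Matrix (Fin 1) (Fin 1) ℝ))).trace - (d + 1)
      = (Real.log (H.det / G.det) + (H⁻¹ * G).trace - d)
        + (g - h) ⬝ᵥ (H⁻¹ *ᵥ (g - h)))
    ∧ (g - h) ⬝ᵥ (H⁻¹ *ᵥ (g - h))
      ≤ Real.log ((fromBlocks (H + vecMulVec h h) (replicateCol (Fin 1) h) (replicateRow (Fin 1) h)
          (1 : Matrix (Fin 1) (Fin 1) ℝ)).det /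
        (fromBlocks (G + vecMulVec g g) (replicateCol (Fin 1) g) (replicateRow (Fin 1) g)
          (1 : Matrix (Fin 1) (Fin 1) ℝ)).det)
      + ((fromBlocks (H + vecMulVec h h) (replicateCol (Fin 1) h) (replicateRow (Fin 1) h)
          (1 : Matrix (Fin 1) (Fin 1) ℝ))⁻¹ *
         (fromBlocks (G + vecMulVec g g) (replicateCol (Fin 1) g) (replicateRow (Fin 1) g)
          (1 : Matrix (Fin 1) (Fin 1) ℝ))).trace - (d + 1) := by
  have hD := logDetDivergence_nonneg hG hH
  have key := logDetDivergence_liftedMatrix hH.isUnit G g h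
  simp only [logDetDivergence, liftedMatrix, Fintype.card_sum, Fintype.card_fin, Nat.cast_add,
    Nat.cast_one] at hD key
  exact ⟨key, by linarith⟩
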